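/- Define H(t) = (1/2)·log(121/4 + t²) − (11/2)/(2(121/4 + t²)) − (121/4 − t²)/(12(121/4 + t²)²) − √3·(arctan(2t/11) − 22t/(121 + 4t²))/(72t³) − log(2π). Then H(t) > 0 for all t ≥ 3.8085. -/
import Mathlib

noncomputable def H (t : ℝ) : ℝ :=
  (1/2) * Real.log (121/4 + t ^ 2) - (11/2) / (2 * (121/4 + t ^ 2))
    - (121/4 - t ^ 2) / (12 * (121/4 + t ^ 2) ^ 2)
    - Real.sqrt 3 * (Real.arctan (2 * t / 11) - 22 * t / (121 + 4 * t ^ 2)) / (72 * t ^ 3)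
    - Real.log (2 * Real.pi)

lemma arctan_le_self' {x : ℝ} (hx : 0 ≤ x) : Real.arctan x ≤ x := by
  have h1 : Real.arctan x < Real.pi / 2 := Real.arctan_lt_pi_div_two x
  have h2 : (0:ℝ) ≤ Real.arctan x := by
    have := Real.arctan_strictMono.monotone hx
    simpa [Real.arctan_zero] using this
  have := Real.le_tan h2 h1
  rwa [Real.tan_arctan] at this

set_option maxHeartbeats 2000000 in
theorem H_pos (t : ℝ) (ht : 3.8085 ≤ t) : 0 < H t := by
  have ht0 : (0:ℝ) < t := by linarith
  have ht2 : (3.8085:ℝ)^2 ≤ t^2 := by nlinarith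
  set u0 : ℝ := 121/4 + (3.8085:ℝ)^2 with hu0def
  have hu00 : (0:ℝ) < u0 := by norm_num [hu0def]
  have hu0 : (0:ℝ) < 121/4 + t^2 := by positivity
  have huu : u0 ≤ 121/4 + t^2 := by simp only [hu0def]; linarith
  -- term 1 : log monotone
  have h1 : Real.log u0 ≤ Real.log (121/4 + t^2) := Real.log_le_log hu00 huu
  -- term 2
  have h2 : (11/2) / (2 * (121/4 + t^2)) ≤ (11/2) / (2 * u0) := by
    apply div_le_div_of_nonneg_left (by norm_num) (by linarith) (by linarith)
  -- term 3
  have C1pos : (0:ℝ) ≤ (121/4 - (3.8085:ℝ)^2) / (12 * u0^2) := by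
    apply div_nonneg _ (by positivity)
    norm_num
  have h3 : (121/4 - t^2) / (12 * (121/4 + t^2)^2)
      ≤ (121/4 - (3.8085:ℝ)^2) / (12 * u0^2) := by
    rcases le_or_gt (t^2) (121/4) with hc | hc
    · apply div_le_div₀ (by norm_num) (by linarith) (by positivity)
      have : u0^2 ≤ (121/4 + t^2)^2 := by nlinarith
      linarith
    · have : (121/4 - t^2) / (12 * (121/4 + t^2)^2) ≤ 0 := by
        apply div_nonpos_of_nonpos_of_nonneg (by linarith) (by positivity)
      linarith
  -- term 4
  have hP : Real.arctan (2*t/11) - 22*t/(121+4*t^2) ≤ 8*t^3/1331 := by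
    have ha : Real.arctan (2*t/11) ≤ 2*t/11 := arctan_le_self' (by positivity)
    have hD : (0:ℝ) < 121 + 4*t^2 := by positivity
    have hb : 2*t/11 - 22*t/(121+4*t^2) ≤ 8*t^3/1331 := by
      rw [div_sub_div _ _ (by norm_num : (11:ℝ) ≠ 0) hD.ne', div_le_div_iff₀ (by positivity) (by norm_num)]
      nlinarith [pow_pos ht0 5]
    linarith
  have hs3 : Real.sqrt 3 ≤ 2 := by
    nlinarith [Real.sq_sqrt (by norm_num : (0:ℝ) ≤ 3), Real.sqrt_nonneg 3]
  have h4 : Real.sqrt 3 * (Real.arctan (2*t/11) - 22*t/(121+4*t^2)) / (72*t^3)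
      ≤ 2/11979 := by
    have ht3 : (0:ℝ) < 72 * t^3 := by positivity
    have step1 : Real.sqrt 3 * (Real.arctan (2*t/11) - 22*t/(121+4*t^2))
        ≤ Real.sqrt 3 * (8*t^3/1331) :=
      mul_le_mul_of_nonneg_left hP (Real.sqrt_nonneg 3)
    have step2 : Real.sqrt 3 * (8*t^3/1331) / (72*t^3) = Real.sqrt 3 / 11979 := by
      field_simp
      ring
    calc Real.sqrt 3 * (Real.arctan (2*t/11) - 22*t/(121+4*t^2)) / (72*t^3)
        ≤ Real.sqrt 3 * (8*t^3/1331) / (72*t^3) := by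
          apply div_le_div_of_nonneg_right step1 ht3.le
      _ = Real.sqrt 3 / 11979 := step2
      _ ≤ 2/11979 := by
          apply div_le_div_of_nonneg_right hs3 (by norm_num)
  -- numeric core : log u0 - 2 log (2π) > 0.12455
  have hpi : Real.pi < 3.141593 := Real.pi_lt_d6
  have hpi0 : (0:ℝ) < Real.pi := Real.pi_pos
  have hkey : (0.12455:ℝ) < Real.log u0 - 2 * Real.log (2 * Real.pi) := by
    have h2pi : (0:ℝ) < 2 * Real.pi := by linarith
    have hsq : (2*Real.pi)^2 < 6.283186^2 := by nlinarith
    have hr0 : u0 / (6.283186:ℝ)^2 ≤ u0 / (2*Real.pi)^2 := by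
      apply div_le_div_of_nonneg_left hu00.le (by positivity) hsq.le
    have hexp : Real.exp 0.12455 < u0 / (6.283186:ℝ)^2 := by
      have e1 : Real.exp (0.12455:ℝ) = (Real.exp (0.12455/16))^16 := by
        rw [← Real.exp_nat_mul]
        norm_num
      have e2 : Real.exp ((0.12455:ℝ)/16) ≤ (1 - 0.12455/16)⁻¹ := by
        have h := Real.add_one_le_exp (-(0.12455/16) : ℝ)
        have hpos : (0:ℝ) < 1 - 0.12455/16 := by norm_num
        have h' : 1 - (0.12455:ℝ)/16 ≤ Real.exp (-(0.12455/16)) := by linarith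
        rw [Real.exp_neg] at h'
        calc Real.exp ((0.12455:ℝ)/16)
            = ((Real.exp (0.12455/16))⁻¹)⁻¹ := by rw [inv_inv]
          _ ≤ (1 - 0.12455/16)⁻¹ := by
              apply inv_anti₀ hpos h'
      have e3 : (Real.exp ((0.12455:ℝ)/16))^16 ≤ ((1 - (0.12455:ℝ)/16)⁻¹)^16 := by
        apply pow_le_pow_left₀ (Real.exp_nonneg _) e2
      have e4 : (((1:ℝ) - 0.12455/16)⁻¹)^16 < u0 / (6.283186:ℝ)^2 := by
        rw [hu0def]
        norm_num
      rw [e1]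
      exact lt_of_le_of_lt e3 e4
    have hlt : Real.exp 0.12455 < u0 / (2*Real.pi)^2 :=
      lt_of_lt_of_le hexp hr0
    have := (Real.lt_log_iff_exp_lt (by positivity)).mpr hlt
    have hlogdiv : Real.log (u0 / (2*Real.pi)^2) = Real.log u0 - Real.log ((2*Real.pi)^2) := by
      apply Real.log_div hu00.ne' (by positivity)
    have hlogpow : Real.log ((2*Real.pi)^2) = 2 * Real.log (2*Real.pi) := by
      rw [Real.log_pow]; norm_num
    rw [hlogdiv, hlogpow] at this
    linarith
  -- numeric bound on the rational terms
  have hsum : (11/2) / (2 * u0) + (121/4 - (3.8085:ℝ)^2) / (12 * u0^2) + 2/11979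
      ≤ 0.062275 := by
    rw [hu0def]
    norm_num
  unfold H
  have h1' : (1/2) * Real.log u0 ≤ (1/2) * Real.log (121/4 + t^2) := by linarith
  linarith
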